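/- arXiv:1807.05694 — 2 statements merged into one kernel-verified Lean document; each statement's English description precedes it below -/
import Mathlib

section
/- Let w > 0, p > 0 and q > 0. Then p·exp(−w·p) = p·(1+q)·exp(−w·p·(1+q)) holds if and only if p = ln(1+q)/(w·q). In other words, a probability p > 0 is magnified by the MIM magnifier with magnifying ratio q > 0 exactly when p = ln(1+q)/(w·q). -/
/-- For `w > 0`, `p > 0`, `q > 0`:
`p * exp(-w*p) = p*(1+q) * exp(-w*p*(1+q))` iff `p = ln(1+q) / (w*q)`. -/
theorem mim_magnifying_ratio_iff (w p q : ℝ) (hw : 0 < w) (hp : 0 < p) (hq : 0 < q) :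
    p * Real.exp (-w * p) = p * (1 + q) * Real.exp (-w * (p * (1 + q))) ↔
      p = Real.log (1 + q) / (w * q) := by
  have h1q : (0:ℝ) < 1 + q := by linarith
  constructor
  · intro h
    have h2 : Real.exp (-w * p) = (1 + q) * Real.exp (-w * (p * (1 + q))) := by
      have := mul_left_cancel₀ (ne_of_gt hp) (by linarith [h] : p * Real.exp (-w * p) = p * ((1 + q) * Real.exp (-w * (p * (1 + q)))))
      exact this
    have h3 : -w * p = Real.log (1 + q) + (-w * (p * (1 + q))) := by
      have := congrArg Real.log h2
      rwa [Real.log_exp, Real.log_mul (ne_of_gt h1q) (Real.exp_ne_zero _), Real.log_exp] at this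
    have h4 : Real.log (1 + q) = w * p * q := by ring_nf at h3 ⊢; linarith
    rw [h4]; field_simp
  · intro h
    have h4 : Real.log (1 + q) = w * p * q := by
      rw [h]; field_simp
    have h5 : (1 + q) = Real.exp (w * p * q) := by
      rw [← h4, Real.exp_log h1q]
    have e : Real.exp (-w * (p * (1 + q))) = Real.exp (-w * p) * Real.exp (-(w * p * q)) := by
      rw [← Real.exp_add]; ring_nf
    have e2 : (1 + q) * Real.exp (-(w * p * q)) = 1 := by
      rw [h5, ← Real.exp_add]; simp
    rw [e]
    linear_combination -p * Real.exp (-w * p) * e2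
end

section
/- Fix w > 0. If 0 < p₁ < p₂ < 1/w and q₁, q₂ > 0 are the respective magnifying ratios of p₁ and p₂ (i.e., pᵢ·exp(−w·pᵢ) = pᵢ·(1+qᵢ)·exp(−w·pᵢ·(1+qᵢ)) for i = 1,2), then q₁ > q₂; that is, the smaller the initial probability, the larger its magnifying ratio under the MIM magnifier. -/
lemma mim_aux_concave (a b : ℝ) (hb : 0 < b) (hba : b < a) :
    b * Real.log (1 + a) < a * Real.log (1 + b) := by
  have ha : 0 < a := hb.trans hba
  have hs : 0 < b / a := div_pos hb ha
  have ht : 0 < 1 - b / a := by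
    have : b / a < 1 := (div_lt_one ha).mpr hba
    linarith
  have key := strictConcaveOn_log_Ioi.2 (x := 1) (y := 1 + a)
    (by norm_num : (1:ℝ) ∈ Set.Ioi 0) (by simp; linarith : (1 + a) ∈ Set.Ioi 0)
    (by intro h; nlinarith [h] : (1:ℝ) ≠ 1 + a) ht hs (by ring)
  simp only [smul_eq_mul, Real.log_one, mul_zero, zero_add, mul_one] at key
  have heq : 1 - b / a + b / a * (1 + a) = 1 + b := by
    field_simp; ring
  rw [heq] at key
  have : (b / a) * Real.log (1 + a) < Real.log (1 + b) := by linarith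
  calc b * Real.log (1 + a) = a * ((b / a) * Real.log (1 + a)) := by
        field_simp
    _ < a * Real.log (1 + b) := by exact (mul_lt_mul_iff_right₀ ha).mpr this

lemma mim_aux_eq (w p q : ℝ) (hw : 0 < w) (hp : 0 < p) (hq : 0 < q)
    (h : p * Real.exp (-w * p) = p * (1 + q) * Real.exp (-w * (p * (1 + q)))) :
    w * p * q = Real.log (1 + q) := by
  have h' : Real.exp (-w * p) = (1 + q) * Real.exp (-w * (p * (1 + q))) := by
    have hrw : p * (1 + q) * Real.exp (-w * (p * (1 + q)))
        = p * ((1 + q) * Real.exp (-w * (p * (1 + q)))) := by ring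
    rw [hrw] at h
    exact mul_left_cancel₀ hp.ne' h
  have hexp : Real.exp (w * p * q) = 1 + q := by
    have := congrArg (fun x => x * Real.exp (w * (p * (1 + q)))) h'
    simp only [mul_assoc, ← Real.exp_add] at this
    have e1 : -w * p + w * (p * (1 + q)) = w * p * q := by ring
    have e2 : -w * (p * (1 + q)) + w * (p * (1 + q)) = 0 := by ring
    rw [e1, e2, Real.exp_zero, mul_one] at this
    exact this
  rw [← hexp, Real.log_exp]

/-- Fix `w > 0`. If `0 < p₁ < p₂ < 1/w` and `q₁, q₂ > 0` are the respective
magnifying ratios of `p₁` and `p₂`, then `q₁ > q₂`. -/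
theorem mim_smaller_prob_larger_ratio (w p₁ p₂ q₁ q₂ : ℝ) (hw : 0 < w)
    (hp₁ : 0 < p₁) (hp₁₂ : p₁ < p₂) (hp₂ : p₂ < 1 / w)
    (hq₁ : 0 < q₁) (hq₂ : 0 < q₂)
    (h₁ : p₁ * Real.exp (-w * p₁) = p₁ * (1 + q₁) * Real.exp (-w * (p₁ * (1 + q₁))))
    (h₂ : p₂ * Real.exp (-w * p₂) = p₂ * (1 + q₂) * Real.exp (-w * (p₂ * (1 + q₂)))) :
    q₂ < q₁ := by
  have hp₂' : 0 < p₂ := hp₁.trans hp₁₂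
  have e₁ := mim_aux_eq w p₁ q₁ hw hp₁ hq₁ h₁
  have e₂ := mim_aux_eq w p₂ q₂ hw hp₂' hq₂ h₂
  by_contra hc
  push_neg at hc
  rcases eq_or_lt_of_le hc with heq | hlt
  · -- q₁ = q₂ forces p₁ = p₂
    subst heq
    have : w * p₁ * q₁ = w * p₂ * q₁ := by rw [e₁, e₂]
    nlinarith [mul_pos (mul_pos hw hq₁) (sub_pos.mpr hp₁₂)]
  · -- q₁ < q₂, then p₂ ≤ p₁ contradiction
    have hconc := mim_aux_concave q₂ q₁ hq₁ hlt
    -- q₁ * log(1+q₂) < q₂ * log(1+q₁)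
    -- p₁ = log(1+q₁)/(w q₁), p₂ = log(1+q₂)/(w q₂)
    -- want p₂ < p₁
    have : w * p₂ * q₂ * q₁ < w * p₁ * q₁ * q₂ := by
      rw [e₁, e₂]; linarith
    nlinarith [mul_pos (mul_pos (mul_pos hw hq₁) hq₂) (sub_pos.mpr hp₁₂)]
end
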